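/- arXiv:math/0510055 — 2 statements merged into one kernel-verified Lean document; each statement's English description precedes it below -/
import Mathlib

section
/- Let $a_1, \dots, a_n$ be vectors in $\mathbb{R}^d$, $\chi \in \mathbb{R}^n$, and $A \subseteq \{1,\dots,n\}$ with associated signs $\varepsilon_i(A)$ as above. If $\Delta_A^\chi = \{x : \varepsilon_i(A)(x\cdot a_i + \chi_i) \ge 0 \ \forall i\}$ is nonempty and bounded, then the vectors $\{\varepsilon_1(A)a_1, \dots, \varepsilon_n(A)a_n\}$ span $\mathbb{R}^d$ over the non-negative real numbers. -/
open Finset in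
/-- If the flipped polyhedron `Δ_A^χ` is nonempty and bounded, then the
flipped vectors `ε_i(A) • a_i` span `ℝ^d` over the non-negative reals. -/
theorem nonneg_span_of_flipped_polyhedron_bounded
    (n d : ℕ) (a : Fin n → (Fin d → ℝ)) (χ : Fin n → ℝ) (A : Finset (Fin n))
    (ε : Fin n → ℝ) (hε : ∀ i, ε i = if i ∈ A then -1 else 1)
    (hne : {x : Fin d → ℝ | ∀ i, 0 ≤ ε i * ((∑ j, x j * a i j) + χ i)}.Nonempty)
    (hbd : Bornology.IsBounded
      {x : Fin d → ℝ | ∀ i, 0 ≤ ε i * ((∑ j, x j * a i j) + χ i)}) :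
    ∀ v : Fin d → ℝ, ∃ c : Fin n → ℝ,
      (∀ i, 0 ≤ c i) ∧ v = ∑ i, c i • (ε i • a i) := by
  classical
  set w : Fin n → (Fin d → ℝ) := fun i => ε i • a i with hwdef
  set C : Set (Fin d → ℝ) :=
    {x | ∃ c : Fin n → ℝ, (∀ i, 0 ≤ c i) ∧ x = ∑ i, c i • w i} with hCdef
  have hzero : (0 : Fin d → ℝ) ∈ C := ⟨0, fun i => le_refl 0, by simp⟩
  have hmemw : ∀ i, w i ∈ C := by
    intro i
    refine ⟨fun k => if k = i then 1 else 0, fun k => by positivity, ?_⟩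
    simp [ite_smul]
  have hconv : Convex ℝ C := by
    rintro x ⟨c, hc, rfl⟩ y ⟨c', hc', rfl⟩ s t hs ht hst
    refine ⟨fun i => s * c i + t * c' i,
      fun i => add_nonneg (mul_nonneg hs (hc i)) (mul_nonneg ht (hc' i)), ?_⟩
    rw [Finset.smul_sum, Finset.smul_sum, ← Finset.sum_add_distrib]
    exact Finset.sum_congr rfl fun i _ => by module
  -- main claim : 0 is in the interior of C
  have hint : (0 : Fin d → ℝ) ∈ interior C := by
    by_contra h0
    -- obtain a nonzero functional which is nonpositive on C
    obtain ⟨f, hfne, hfC⟩ :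
        ∃ f : (Fin d → ℝ) →L[ℝ] ℝ, f ≠ 0 ∧ ∀ x ∈ C, f x ≤ 0 := by
      rcases (interior C).eq_empty_or_nonempty with hemp | ⟨x₀, hx₀⟩
      · -- C spans a proper subspace
        have hspan : Submodule.span ℝ C ≠ ⊤ := by
          intro htop
          have hvs : vectorSpan ℝ C = ⊤ := by
            rw [eq_top_iff, ← htop, Submodule.span_le]
            intro x hx
            have hx' : x - 0 ∈ C -ᵥ C := Set.vsub_mem_vsub hx hzero
            rw [sub_zero] at hx'
            exact Submodule.subset_span hx'
          have haff : affineSpan ℝ C = ⊤ :=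
            (AffineSubspace.affineSpan_eq_top_iff_vectorSpan_eq_top_of_nonempty ℝ (Fin d → ℝ) (Fin d → ℝ) ⟨0, hzero⟩).mpr hvs
          have := (hconv.interior_nonempty_iff_affineSpan_eq_top).mpr haff
          rw [hemp] at this
          exact Set.not_nonempty_empty this
        obtain ⟨v₀, hv₀⟩ : ∃ v₀, v₀ ∉ Submodule.span ℝ C := by
          by_contra h
          push_neg at h
          exact hspan (Submodule.eq_top_iff'.mpr h)
        obtain ⟨f, u, hfu, hu⟩ :=
          geometric_hahn_banach_closed_point (Submodule.span ℝ C).convex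
            (Submodule.span ℝ C).closed_of_finiteDimensional hv₀
        have hker : ∀ x ∈ Submodule.span ℝ C, f x = 0 := by
          intro x hx
          by_contra hfx
          have := hfu ((2 * u / f x) • x) (Submodule.smul_mem _ _ hx)
          rw [map_smul, smul_eq_mul, div_mul_cancel₀ _ hfx] at this
          have h0u : f (0 : Fin d → ℝ) < u := hfu 0 (Submodule.zero_mem _)
          rw [map_zero] at h0u
          linarith
        refine ⟨f, ?_, fun x hx => (hker x (Submodule.subset_span hx)).le⟩
        intro hf0
        have h0u : f (0 : Fin d → ℝ) < u := hfu 0 (Submodule.zero_mem _)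
        rw [map_zero] at h0u
        rw [hf0] at hu
        simp at hu
        linarith
      · obtain ⟨f, hf⟩ :=
          geometric_hahn_banach_open_point hconv.interior isOpen_interior h0
        have hf0 : ∀ y ∈ interior C, f y < 0 := by
          intro y hy
          have := hf y hy
          rwa [map_zero] at this
        refine ⟨f, ?_, ?_⟩
        · intro h
          have := hf0 x₀ hx₀
          rw [h] at this
          simp at this
        · intro x hx
          -- f ((1-t) x₀ + t x) < 0 for t ∈ [0,1), take limit t → 1
          have key : ∀ t : ℝ, t ∈ Set.Ico (0:ℝ) 1 →
              f ((1 - t) • x₀ + t • x) < 0 := by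
            intro t ht
            exact hf0 _ (hconv.combo_interior_self_mem_interior hx₀ hx
              (by linarith [ht.2]) ht.1 (by ring))
          have hcont : ContinuousWithinAt
              (fun t : ℝ => f ((1 - t) • x₀ + t • x)) (Set.Ico (0:ℝ) 1) 1 := by
            apply Continuous.continuousWithinAt
            fun_prop
          have hval : f ((1 - (1:ℝ)) • x₀ + (1:ℝ) • x) = f x := by norm_num
          have hlim : Filter.Tendsto (fun t : ℝ => f ((1 - t) • x₀ + t • x))
              (nhdsWithin 1 (Set.Ico (0:ℝ) 1)) (nhds (f x)) := hval ▸ hcont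
          have hne' : (nhdsWithin (1:ℝ) (Set.Ico (0:ℝ) 1)).NeBot := by
            apply mem_closure_iff_nhdsWithin_neBot.mp
            rw [closure_Ico (by norm_num : (0:ℝ) ≠ 1)]
            exact ⟨le_of_lt one_pos, le_refl 1⟩
          exact le_of_tendsto hlim
            (Filter.eventually_of_mem self_mem_nhdsWithin fun t ht => (key t ht).le)
    -- build the unbounded direction
    set y : Fin d → ℝ := fun j => -f (Pi.single j (1:ℝ) : Fin d → ℝ) with hydef
    have hfx : ∀ x : Fin d → ℝ, f x = -∑ j, x j * y j := by
      intro x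
      have hxrep : x = ∑ j, x j • (Pi.single j (1:ℝ) : Fin d → ℝ) := by
        ext k
        simp [Finset.sum_apply, Pi.single_apply]
      conv_lhs => rw [hxrep]
      rw [map_sum, ← Finset.sum_neg_distrib]
      refine Finset.sum_congr rfl fun j _ => ?_
      rw [map_smul, smul_eq_mul, hydef]
      ring
    have hyne : y ≠ 0 := by
      intro hy0
      apply hfne
      ext x
      rw [hfx x, hy0]
      simp
    have hdot : ∀ i, 0 ≤ ∑ j, y j * w i j := by
      intro i
      have := hfC (w i) (hmemw i)
      rw [hfx] at this
      have h2 : 0 ≤ ∑ j, w i j * y j := by linarith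
      calc (0:ℝ) ≤ ∑ j, w i j * y j := h2
        _ = ∑ j, y j * w i j := Finset.sum_congr rfl fun j _ => mul_comm _ _
    obtain ⟨x₀, hx₀⟩ := hne
    have hray : ∀ t : ℝ, 0 ≤ t →
        (x₀ + t • y) ∈ {x : Fin d → ℝ | ∀ i, 0 ≤ ε i * ((∑ j, x j * a i j) + χ i)} := by
      intro t ht i
      have hexp : ε i * ((∑ j, (x₀ + t • y) j * a i j) + χ i)
          = ε i * ((∑ j, x₀ j * a i j) + χ i) + t * ∑ j, y j * w i j := by
        have : ∀ j, (x₀ + t • y) j * a i j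
            = x₀ j * a i j + t * (y j * a i j) := by
          intro j; simp [Pi.add_apply, Pi.smul_apply, smul_eq_mul]; ring
        rw [Finset.sum_congr rfl fun j _ => this j, Finset.sum_add_distrib,
          ← Finset.mul_sum]
        have hw : ∀ j, y j * w i j = ε i * (y j * a i j) := by
          intro j; simp [hwdef, Pi.smul_apply, smul_eq_mul]; ring
        rw [Finset.sum_congr rfl fun j _ => hw j, ← Finset.mul_sum]
        ring
      rw [Set.mem_setOf_eq] at hx₀
      have := hx₀ i
      have := mul_nonneg ht (hdot i)
      rw [hexp]
      linarith
    rw [isBounded_iff_forall_norm_le] at hbd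
    obtain ⟨R, hR⟩ := hbd
    have hy0 : 0 < ‖y‖ := norm_pos_iff.mpr hyne
    set t : ℝ := (|R| + ‖x₀‖ + 1) / ‖y‖ with htdef
    have ht0 : 0 ≤ t := by positivity
    have hmem := hray t ht0
    have hle := hR _ hmem
    have h1 : ‖t • y‖ = |R| + ‖x₀‖ + 1 := by
      rw [norm_smul, Real.norm_of_nonneg ht0, htdef, div_mul_cancel₀ _ (ne_of_gt hy0)]
    have h2 : ‖t • y‖ ≤ ‖x₀ + t • y‖ + ‖x₀‖ := by
      calc ‖t • y‖ = ‖(x₀ + t • y) - x₀‖ := by rw [add_sub_cancel_left]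
        _ ≤ ‖x₀ + t • y‖ + ‖x₀‖ := norm_sub_le _ _
    have : |R| ≤ R := by linarith [le_abs_self R]
    linarith [le_abs_self R, abs_nonneg R]
  -- conclude from 0 ∈ interior C
  intro v
  obtain ⟨r, hr, hball⟩ := Metric.mem_nhds_iff.mp (mem_interior_iff_mem_nhds.mp hint)
  by_cases hv : v = 0
  · exact ⟨0, fun i => le_refl 0, by simp [hv]⟩
  · have hvn : 0 < ‖v‖ := norm_pos_iff.mpr hv
    have hu : (r / (2 * ‖v‖)) • v ∈ C := by
      apply hball
      rw [Metric.mem_ball, dist_zero_right, norm_smul, Real.norm_of_nonneg (by positivity)]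
      rw [div_mul_eq_mul_div, mul_comm]
      calc ‖v‖ * r / (2 * ‖v‖) = r / 2 := by field_simp
        _ < r := by linarith
    obtain ⟨c, hc, hcu⟩ := hu
    refine ⟨fun i => (2 * ‖v‖ / r) * c i,
      fun i => mul_nonneg (by positivity) (hc i), ?_⟩
    have hvscale : v = (2 * ‖v‖ / r) • ((r / (2 * ‖v‖)) • v) := by
      rw [smul_smul]
      rw [div_mul_div_comm, mul_comm r (2 * ‖v‖), div_self (by positivity)]
      rw [one_smul]
    conv_lhs => rw [hvscale, hcu]
    rw [Finset.smul_sum]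
    exact Finset.sum_congr rfl fun i _ => by rw [smul_smul]
end

section
/- Let $X$ be a topological space, let $\{U_i\}_{i \in I}$ be a finite open cover of $X$, and suppose the restriction maps $H^*(X;\mathbb{R}) \to H^*(U_i;\mathbb{R})$ are all considered together as a single map $\Psi : H^*(X;\mathbb{R}) \to \bigoplus_{i} H^*(U_i;\mathbb{R})$. If every restriction $H^*(X;\mathbb{R}) \to H^*(U_i;\mathbb{R})$ is surjective and $H^*(X;\mathbb{R})$ satisfies the level property with respect to the top degrees of the $U_i$, then injectivity of $\Psi$ in top degree together with Poincaré duality on each $U_i$ implies: for every nonzero $\alpha \in H^*(X;\mathbb{R})$ with $\Psi(\alpha) \neq 0$, there exists $\beta \in H^*(X;\mathbb{R})$ such that $\alpha \cdot \beta$ restricts to a nonzero top-degree class on some $U_i$. In particular (Remark 2.4 of the paper, abstract version): if $A$ is a graded ring, $B_1,\dots,B_m$ are graded rings each satisfying Poincaré duality in degree $2d$, $\phi_i : A \to B_i$ are surjective graded ring homomorphisms, and $\bigoplus \phi_i$ is injective, then $A$ is level: every nonzero homogeneous element of $A$ divides a nonzero element of degree $2d$. -/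
/-- Abstract version of Remark 2.4: if `A` is a graded ring whose top degree
is at most `2d`, `B₁, …, Bₘ` are graded rings each satisfying Poincaré
duality in degree `2d`, `φᵢ : A → Bᵢ` are surjective graded ring homomorphisms
and `⊕φᵢ` is injective, then `A` is level: every nonzero homogeneous element
of `A` divides a nonzero element of degree `2d`. -/
theorem level_of_injective_into_poincare_duality
    (A : Type*) [CommRing A] [Algebra ℝ A] (𝒜 : ℕ → Submodule ℝ A)
    [GradedRing 𝒜] (m d : ℕ)
    (B : Fin m → Type*) [∀ i, CommRing (B i)] [∀ i, Algebra ℝ (B i)]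
    (ℬ : ∀ i, ℕ → Submodule ℝ (B i)) [∀ i, GradedRing (ℬ i)]
    -- each `Bᵢ` satisfies Poincaré duality in degree `2d`:
    (hBtop : ∀ i, Module.finrank ℝ (ℬ i (2 * d)) = 1)
    (hBpd : ∀ i, ∀ k, k ≤ 2 * d → ∀ x ∈ ℬ i k,
      (∀ y ∈ ℬ i (2 * d - k), x * y = 0) → x = 0)
    -- the `φᵢ` are surjective graded ring homomorphisms:
    (φ : ∀ i, A →ₐ[ℝ] B i) (hsurj : ∀ i, Function.Surjective (φ i))
    (hgraded : ∀ i k, Submodule.map (φ i).toLinearMap (𝒜 k) ≤ ℬ i k)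
    -- the top nonzero degree of `A` is at most `2d`:
    (hAtop : ∀ k, 2 * d < k → 𝒜 k = ⊥)
    -- `⊕ φᵢ` is injective:
    (hinj : ∀ a : A, (∀ i, φ i a = 0) → a = 0) :
    ∀ k : ℕ, ∀ a ∈ 𝒜 k, a ≠ 0 → ∃ b : A, a * b ≠ 0 ∧ a * b ∈ 𝒜 (2 * d) := by
  classical
  intro k a ha hane
  have hk : k ≤ 2 * d := by
    by_contra h
    push_neg at h
    exact hane (by simpa [hAtop k h] using ha)
  obtain ⟨i, hi⟩ : ∃ i, φ i a ≠ 0 := by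
    by_contra h
    push_neg at h
    exact hane (hinj a h)
  have hφa : φ i a ∈ ℬ i k := hgraded i k ⟨a, ha, rfl⟩
  obtain ⟨y, hy, hxy⟩ : ∃ y ∈ ℬ i (2 * d - k), φ i a * y ≠ 0 := by
    by_contra h
    push_neg at h
    exact hi (hBpd i k hk (φ i a) hφa h)
  obtain ⟨b, rfl⟩ := hsurj i y
  set b' : A := (DirectSum.decompose 𝒜 b (2 * d - k) : A) with hb'def
  have hb'mem : b' ∈ 𝒜 (2 * d - k) := (DirectSum.decompose 𝒜 b (2 * d - k)).2
  have hφcomp : ∀ j, φ i ((DirectSum.decompose 𝒜 b j : A)) ∈ ℬ i j :=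
    fun j => hgraded i j ⟨_, (DirectSum.decompose 𝒜 b j).2, rfl⟩
  have hφb' : φ i b' = φ i b := by
    have hsum : φ i b =
        ∑ j ∈ (DirectSum.decompose 𝒜 b).support,
          φ i ((DirectSum.decompose 𝒜 b j : A)) := by
      conv_lhs => rw [← DirectSum.sum_support_decompose 𝒜 b]
      rw [map_sum]
    have h1 : (DirectSum.decompose (ℬ i) (φ i b) (2 * d - k) : B i) = φ i b :=
      DirectSum.decompose_of_mem_same (ℬ i) hy
    have h2 : (DirectSum.decompose (ℬ i) (φ i b) (2 * d - k) : B i) = φ i b' := by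
      rw [hsum, DirectSum.decompose_sum, DFinsupp.finset_sum_apply,
        AddSubmonoidClass.coe_finset_sum]
      have hterm : ∀ j ∈ (DirectSum.decompose 𝒜 b).support,
          (DirectSum.decompose (ℬ i) (φ i ((DirectSum.decompose 𝒜 b j : A)))
            (2 * d - k) : B i)
          = if j = 2 * d - k then φ i ((DirectSum.decompose 𝒜 b j : A)) else 0 := by
        intro j _
        split_ifs with h
        · subst h; exact DirectSum.decompose_of_mem_same (ℬ i) (hφcomp _)
        · exact DirectSum.decompose_of_mem_ne (ℬ i) (hφcomp j) h
      rw [Finset.sum_congr rfl hterm, Finset.sum_ite_eq']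
      split_ifs with h
      · rfl
      · have h0 : (DirectSum.decompose 𝒜 b (2 * d - k) : A) = (0 : A) := by
          simpa using DFinsupp.notMem_support_iff.mp h
        rw [hb'def, h0, map_zero]
    rw [← h2, h1]
  refine ⟨b', ?_, ?_⟩
  · intro h
    apply hxy
    rw [← hφb', ← map_mul, h, map_zero]
  · have := SetLike.mul_mem_graded ha hb'mem
    rwa [Nat.add_sub_cancel' hk] at this
end
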